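/- arXiv:2504.07045 — 5 statements merged into one kernel-verified Lean document; each statement's English description precedes it below -/
import Mathlib

section
/- Let S = K[x1,...,xn] and let I ⊆ S be a monomial ideal. Then for every s ≥ 1, the s-th symbolic power of I (defined as the intersection of I^s S_P ∩ S over minimal primes P of I) equals the intersection of Q(P)^s over minimal primes P, where Q(P) is the primary component of I corresponding to P. -/
set_option synthInstance.maxHeartbeats 1000000
set_option maxHeartbeats 1000000

open MvPolynomial

section Defs

variable {K : Type*} [Field K] {σ : Type*}

/-- `I` is a monomial ideal. -/
def IsMonomialIdeal (I : Ideal (MvPolynomial σ K)) : Prop :=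
  ∃ A : Set (σ →₀ ℕ), I = Ideal.span ((fun a => (monomial a (1 : K) : MvPolynomial σ K)) '' A)

/-- Exponent vectors of the minimal monomial generators of `I`. -/
def minGens (I : Ideal (MvPolynomial σ K)) : Set (σ →₀ ℕ) :=
  {a | (monomial a (1 : K) : MvPolynomial σ K) ∈ I ∧
    ∀ b : σ →₀ ℕ, (monomial b (1 : K) : MvPolynomial σ K) ∈ I → b ≤ a → b = a}

/-- A support-2 monomial ideal: every minimal monomial generator is supported
on exactly two variables. -/
def IsSupportTwo (I : Ideal (MvPolynomial σ K)) : Prop :=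
  ∀ a ∈ minGens I, a.support.card = 2

variable [DecidableEq σ]

/-- Minimal monomial generators of `I` supported on `{i, j}`. -/
def supportedOn (I : Ideal (MvPolynomial σ K)) (i j : σ) : Set (σ →₀ ℕ) :=
  {a | a ∈ minGens I ∧ a.support = {i, j}}

/-- `ν_{i,j}`: the minimum exponent of `x_i` among the minimal generators of `I`
supported on `{i, j}`. -/
noncomputable def nuExp (I : Ideal (MvPolynomial σ K)) (i j : σ) : ℕ :=
  sInf ((fun a => a i) '' supportedOn I i j)

/-- `μ_{i,j}`: the maximum exponent of `x_i` among the minimal generators of `I`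
supported on `{i, j}`. -/
noncomputable def muExp (I : Ideal (MvPolynomial σ K)) (i j : σ) : ℕ :=
  sSup ((fun a => a i) '' supportedOn I i j)

/-- The underlying simple graph `G(I)` of a support-2 monomial ideal. -/
def underGraph (I : Ideal (MvPolynomial σ K)) : SimpleGraph σ where
  Adj i j := i ≠ j ∧ (supportedOn I i j).Nonempty
  symm := ⟨by
    rintro i j ⟨hij, a, hmin, hs⟩
    exact ⟨hij.symm, a, hmin, by rw [hs, Finset.pair_comm]⟩⟩
  loopless := ⟨fun i h => h.1 rfl⟩

end Defs

section Symbolic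

variable {R : Type*} [CommRing R]

/-- The component of `I` at a prime `P`, namely `I S_P ∩ S`. -/
noncomputable def localizedComponent (I P : Ideal R) (hP : P.IsPrime) : Ideal R :=
  letI := hP
  (I.map (algebraMap R (Localization.AtPrime P))).comap
    (algebraMap R (Localization.AtPrime P))

/-- The `s`-th symbolic power `I^{(s)} = ⋂_{P ∈ MinAss(I)} (I^s S_P ∩ S)`. -/
noncomputable def symbolicPower (I : Ideal R) (s : ℕ) : Ideal R :=
  ⨅ P : I.minimalPrimes, localizedComponent (I ^ s) P.1 P.2.1.1

/-- A Simis ideal: `I^{(s)} = I^s` for all `s ≥ 1`. -/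
def IsSimis (I : Ideal R) : Prop := ∀ s : ℕ, 1 ≤ s → symbolicPower I s = I ^ s

/-- `I` has no embedded associated primes. -/
def NoEmbeddedPrimes (I : Ideal R) : Prop :=
  ∀ P ∈ associatedPrimes R (R ⧸ I), P ∈ I.minimalPrimes

end Symbolic

section Decomp

variable {K : Type*} [Field K] {σ : Type*}

/-- An irreducible monomial ideal: generated by pure powers of variables. -/
def IsIrredMonomialIdeal (Q : Ideal (MvPolynomial σ K)) : Prop :=
  ∃ (t : Finset σ) (e : σ → ℕ), (∀ i ∈ t, 1 ≤ e i) ∧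
    Q = Ideal.span ((fun i => (X i : MvPolynomial σ K) ^ e i) '' t)

/-- `I` has a minimal (irredundant, distinct radicals) irreducible decomposition. -/
def HasMinimalIrredDecomp (I : Ideal (MvPolynomial σ K)) : Prop :=
  ∃ (r : ℕ) (Q : Fin r → Ideal (MvPolynomial σ K)),
    (∀ k, IsIrredMonomialIdeal (Q k)) ∧ I = ⨅ k, Q k ∧
    (∀ k, (⨅ l ∈ ({k}ᶜ : Set (Fin r)), Q l) ≠ I) ∧
    (∀ k l, k ≠ l → (Q k).radical ≠ (Q l).radical)

/-- The ideal obtained from `J` by the standard linear weighting `x_i ↦ x_i^{d_i}`. -/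
noncomputable def weightedIdeal (d : σ → ℕ) (J : Ideal (MvPolynomial σ K)) : Ideal (MvPolynomial σ K) :=
  Ideal.span {m | ∃ a ∈ minGens J, ∃ b : σ →₀ ℕ,
    (∀ i, b i = d i * a i) ∧ m = (monomial b (1 : K) : MvPolynomial σ K)}

/-- `I` has a standard linear weighting: there are `d_i ≥ 1` such that every
minimal generator supported on `{i,j}` is `x_i^{d_i} x_j^{d_j}`. -/
def HasStdWeighting (I : Ideal (MvPolynomial σ K)) : Prop :=
  ∃ d : σ → ℕ, (∀ i, 1 ≤ d i) ∧ ∀ a ∈ minGens I, ∀ i ∈ a.support, a i = d i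

variable (K) in
/-- The edge ideal of a simple graph. -/
noncomputable def edgeIdeal (G : SimpleGraph σ) : Ideal (MvPolynomial σ K) :=
  Ideal.span {m | ∃ i j, G.Adj i j ∧ m = (X i * X j : MvPolynomial σ K)}

end Decomp

section Graph

variable {σ : Type*}

/-- A vertex cover of a simple graph. -/
def IsVertexCover (G : SimpleGraph σ) (C : Set σ) : Prop :=
  ∀ ⦃i j⦄, G.Adj i j → i ∈ C ∨ j ∈ C

/-- A minimal vertex cover of a simple graph. -/
def IsMinimalVertexCover (G : SimpleGraph σ) (C : Set σ) : Prop :=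
  IsVertexCover G C ∧ ∀ D ⊆ C, IsVertexCover G D → D = C

end Graph

section CM

variable {K : Type*} [Field K] {σ : Type*}

/-- The depth of `S/I` with respect to the irrelevant maximal ideal
`⟨x_1, …, x_n⟩`: the supremum of lengths of regular sequences on `S/I`
consisting of elements of that ideal. -/
noncomputable def quotDepth (I : Ideal (MvPolynomial σ K)) : ℕ∞ :=
  sSup {n : ℕ∞ | ∃ rs : List (MvPolynomial σ K), (rs.length : ℕ∞) = n ∧
    (∀ r ∈ rs, r ∈ Ideal.span (Set.range (X : σ → MvPolynomial σ K))) ∧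
    RingTheory.Sequence.IsRegular (MvPolynomial σ K ⧸ I)
      (rs.map (Ideal.Quotient.mk I))}

/-- `S/I` is Cohen–Macaulay: depth equals Krull dimension. -/
def IsCohenMacaulayQuot (I : Ideal (MvPolynomial σ K)) : Prop :=
  (quotDepth I : WithBot ℕ∞) = ringKrullDim (MvPolynomial σ K ⧸ I)

/-- The height of a prime ideal, as the Krull dimension of the localization. -/
noncomputable def primeHeight' {R : Type*} [CommRing R] (P : Ideal R) (hP : P.IsPrime) :
    WithBot ℕ∞ :=
  letI := hP
  ringKrullDim (Localization.AtPrime P)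

/-- `I` is unmixed: all associated primes of `S/I` have the same height. -/
def IsUnmixed {R : Type*} [CommRing R] (I : Ideal R) : Prop :=
  ∀ P, ∀ hP : P ∈ associatedPrimes R (R ⧸ I), ∀ Q, ∀ hQ : Q ∈ associatedPrimes R (R ⧸ I),
    primeHeight' P hP.1 = primeHeight' Q hQ.1

end CM


/-! Localizing a monomial ideal at a prime `P` and contracting back amounts to setting `x_i = 1`
for every variable `x_i ∉ P`: a monomial ideal generated in the variables lying in `P` is already
saturated with respect to every `u ∉ P`, as one sees by comparing lowest-degree parts. That
substitution is a ring homomorphism, so it commutes with powers and `I^s S_P ∩ S = (I S_P ∩ S)^s`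
for every prime `P`, minimal or not. -/

open scoped Pointwise

theorem mem_localizedComponent_iff {R : Type*} [CommRing R] {J P : Ideal R} (hP : P.IsPrime)
    {x : R} : x ∈ localizedComponent J P hP ↔ ∃ u ∉ P, u * x ∈ J :=
  IsLocalization.algebraMap_mem_map_algebraMap_iff P.primeCompl _ J x

namespace Finsupp

theorem weight_indicator_one_eq_zero_iff {σ : Type*} (T : Set σ) (e : σ →₀ ℕ) :
    weight (T.indicator 1) e = 0 ↔ ∀ i ∈ T, e i = 0 := by
  classical
  simp only [weight_apply, Finsupp.sum, Set.indicator_apply, Pi.one_apply, smul_eq_mul,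
    mul_ite, mul_one, mul_zero, Finset.sum_eq_zero_iff, mem_support_iff, ne_eq,
    ite_eq_right_iff]
  exact forall_congr' fun i => by tauto

end Finsupp

section MonomialIdeal

variable {K : Type*} [Field K] {σ : Type*}

open MvPolynomial

theorem isMonomialIdeal_top : IsMonomialIdeal (⊤ : Ideal (MvPolynomial σ K)) :=
  ⟨{0}, by simp⟩

theorem IsMonomialIdeal.mul {I J : Ideal (MvPolynomial σ K)} (hI : IsMonomialIdeal I)
    (hJ : IsMonomialIdeal J) : IsMonomialIdeal (I * J) := by
  obtain ⟨A, rfl⟩ := hI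
  obtain ⟨B, rfl⟩ := hJ
  refine ⟨A + B, ?_⟩
  rw [Ideal.span_mul_span', ← Set.image2_mul, Set.image2_image_left, Set.image2_image_right,
    ← Set.image2_add, Set.image_image2]
  simp only [monomial_mul, mul_one]

theorem IsMonomialIdeal.pow {I : Ideal (MvPolynomial σ K)} (hI : IsMonomialIdeal I) :
    ∀ s : ℕ, IsMonomialIdeal (I ^ s)
  | 0 => by simpa using isMonomialIdeal_top
  | s + 1 => by simpa [pow_succ] using (hI.pow s).mul hI

end MonomialIdeal

namespace MvPolynomial

variable {K : Type*} [Field K] {σ : Type*}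

theorem exists_sub_mem_span_monomial (B : Set (σ →₀ ℕ)) (f : MvPolynomial σ K) :
    ∃ r, f - r ∈ Ideal.span ((fun b => monomial b (1 : K)) '' B) ∧
      ∀ c ∈ r.support, ∀ b ∈ B, ¬ b ≤ c := by
  classical
  let good : (σ →₀ ℕ) → Prop := fun c => ∃ b ∈ B, b ≤ c
  refine ⟨∑ c ∈ f.support.filter (¬ good ·), monomial c (f.coeff c), ?_, ?_⟩
  · nth_rw 1 [f.as_sum, ← Finset.sum_filter_add_sum_filter_not f.support good, add_sub_cancel_right]
    refine Ideal.sum_mem _ fun c hc => ?_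
    obtain ⟨b, hb, hbc⟩ := (Finset.mem_filter.mp hc).2
    have : monomial c (f.coeff c) = monomial (c - b) (f.coeff c) * monomial b 1 := by
      rw [monomial_mul, mul_one, tsub_add_cancel_of_le hbc]
    rw [this]
    exact Ideal.mul_mem_left _ _ (Ideal.subset_span ⟨b, hb, rfl⟩)
  · intro c hc b hb hbc
    rw [mem_support_iff, coeff_sum] at hc
    simp only [coeff_monomial, Finset.sum_ite_eq', Finset.mem_filter] at hc
    split_ifs at hc with h
    exacts [h.2 ⟨b, hb, hbc⟩, hc rfl]

/- Grade by the total degree in the variables of `T`. The degree-`0` part of `g` is nonzero, and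
its product with the lowest part of `r` is the lowest part of `g * r`; it is nonzero because power
series over a field form a domain. -/
theorem exists_add_mem_support_mul {T : Set σ} {g r : MvPolynomial σ K}
    (hg : g ∉ Ideal.span (X '' T)) (hr : r ≠ 0) :
    ∃ e c, (∀ i ∈ T, e i = 0) ∧ c ∈ r.support ∧ e + c ∈ (g * r).support := by
  classical
  let w : σ → ℕ := T.indicator 1
  let G : MvPowerSeries σ K := g
  let R : MvPowerSeries σ K := r
  have hG : G.weightedOrder w = (0 : ℕ) := by
    rw [mem_ideal_span_X_image] at hg
    push Not at hg
    obtain ⟨m, hm, hmT⟩ := hg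
    refine le_antisymm ?_ bot_le
    have := MvPowerSeries.weightedOrder_le w (f := G) (d := m) (by simpa [G] using hm)
    rwa [(Finsupp.weight_indicator_one_eq_zero_iff T m).mpr hmT] at this
  have hR : ((R.weightedOrder w).toNat : ℕ∞) = R.weightedOrder w :=
    (MvPowerSeries.ne_zero_iff_weightedOrder_finite w).mp (by simpa [R] using hr)
  set q := (R.weightedOrder w).toNat
  have hlow := MvPowerSeries.weightedHomogeneousComponent_mul_of_le_weightedOrder hG.ge hR.le
  have hlow_ne : G.weightedHomogeneousComponent w 0 * R.weightedHomogeneousComponent w q ≠ 0 :=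
    mul_ne_zero (MvPowerSeries.weightedHomogeneousComponent_of_weightedOrder hG.symm)
      (MvPowerSeries.weightedHomogeneousComponent_of_weightedOrder hR)
  obtain ⟨d, hd⟩ : ∃ d, MvPowerSeries.coeff d
      (G.weightedHomogeneousComponent w 0 * R.weightedHomogeneousComponent w q) ≠ 0 := by
    by_contra! h
    exact hlow_ne (MvPowerSeries.ext h)
  have hd_mul := hd
  rw [← hlow, MvPowerSeries.coeff_weightedHomogeneousComponent] at hd_mul
  rw [MvPowerSeries.coeff_mul] at hd
  obtain ⟨⟨e, c⟩, hec, hne⟩ := Finset.exists_ne_zero_of_sum_ne_zero hd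
  rw [Finset.HasAntidiagonal.mem_antidiagonal] at hec
  have he := left_ne_zero_of_mul hne
  have hc := right_ne_zero_of_mul hne
  rw [MvPowerSeries.coeff_weightedHomogeneousComponent] at he hc
  refine ⟨e, c, (Finsupp.weight_indicator_one_eq_zero_iff T e).mp ?_, ?_, ?_⟩
  · by_contra h
    exact he (if_neg h)
  · exact mem_support_iff.mpr fun h0 => hc (by simp [R, h0])
  · rw [hec]
    exact mem_support_iff.mpr fun h0 => hd_mul (by simp [G, R, ← coe_mul, h0])

theorem mem_span_monomial_of_mul_mem {T : Set σ} {B : Set (σ →₀ ℕ)}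
    (hB : ∀ b ∈ B, ∀ i ∉ T, b i = 0) {g f : MvPolynomial σ K} (hg : g ∉ Ideal.span (X '' T))
    (hgf : g * f ∈ Ideal.span ((fun b => monomial b (1 : K)) '' B)) :
    f ∈ Ideal.span ((fun b => monomial b (1 : K)) '' B) := by
  obtain ⟨r, hfr, hr⟩ := exists_sub_mem_span_monomial B f
  suffices r = 0 by rwa [this, sub_zero] at hfr
  by_contra hr0
  obtain ⟨e, c, he, hc, hec⟩ := exists_add_mem_support_mul hg hr0
  have hgr : g * r ∈ Ideal.span ((fun b => monomial b (1 : K)) '' B) := by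
    rw [show g * r = g * f - g * (f - r) by ring]
    exact sub_mem hgf (Ideal.mul_mem_left _ g hfr)
  obtain ⟨b, hb, hbec⟩ := mem_ideal_span_monomial_image.mp hgr _ hec
  refine hr c hc b hb fun i => ?_
  by_cases hi : i ∈ T
  · simpa [he i hi] using hbec i
  · simp [hB b hb i hi]

open Classical in
noncomputable def evalOneOff (T : Set σ) : MvPolynomial σ K →ₐ[K] MvPolynomial σ K :=
  aeval fun i => if i ∈ T then X i else 1

open Classical in
theorem evalOneOff_monomial (T : Set σ) (a : σ →₀ ℕ) :
    evalOneOff T (monomial a (1 : K)) = monomial (a.filter (· ∈ T)) 1 := by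
  rw [evalOneOff, aeval_monomial, monomial_eq, Finsupp.prod_filter_index, Finsupp.support_filter,
    Finset.prod_filter, Finsupp.prod]
  simp [ite_pow]

theorem monomial_one_mem_iff_of_isPrime {P : Ideal (MvPolynomial σ K)} (hP : P.IsPrime)
    {a : σ →₀ ℕ} :
    monomial a (1 : K) ∈ P ↔ ∃ i ∈ a.support, X i ∈ P := by
  rw [monomial_eq, map_one, one_mul, Finsupp.prod, Ideal.IsPrime.prod_mem_iff]
  refine exists_congr fun i => and_congr_right fun hi => ?_
  exact hP.pow_mem_iff_mem _ (Nat.pos_of_ne_zero (Finsupp.mem_support_iff.mp hi))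

theorem monomial_one_eq_mul_filter (p : σ → Prop) [DecidablePred p] (a : σ →₀ ℕ) :
    monomial a (1 : K) = monomial (a.filter (¬ p ·)) 1 * monomial (a.filter p) 1 := by
  rw [monomial_mul, one_mul, add_comm, Finsupp.filter_add_filter_not]

theorem localizedComponent_eq_map_evalOneOff {J P : Ideal (MvPolynomial σ K)}
    (hJ : IsMonomialIdeal J) (hP : P.IsPrime) :
    localizedComponent J P hP = J.map (evalOneOff {i | X i ∈ P}) := by
  classical
  obtain ⟨A, rfl⟩ := hJ
  set T : Set σ := {i | X i ∈ P}
  have hmap : (Ideal.span ((fun a => monomial a (1 : K)) '' A)).map (evalOneOff T) =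
      Ideal.span ((fun b => monomial b (1 : K)) '' ((·.filter (· ∈ T)) '' A)) := by
    rw [Ideal.map_span, Set.image_image, Set.image_image]
    simp only [evalOneOff_monomial]
  rw [hmap]
  apply le_antisymm
  · intro x hx
    obtain ⟨u, hu, hux⟩ := (mem_localizedComponent_iff hP).mp hx
    have hB : ∀ b ∈ (·.filter (· ∈ T)) '' A, ∀ i ∉ T, b i = 0 := by
      rintro _ ⟨a, -, rfl⟩ i hi
      simp [hi]
    have hXT : Ideal.span (X '' T) ≤ P := Ideal.span_le.mpr (by rintro _ ⟨i, hi, rfl⟩; exact hi)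
    refine mem_span_monomial_of_mul_mem hB (fun h => hu (hXT h)) ?_
    refine Ideal.span_le.mpr ?_ hux
    rintro _ ⟨a, ha, rfl⟩
    dsimp only [SetLike.mem_coe]
    rw [monomial_one_eq_mul_filter (· ∈ T)]
    exact Ideal.mul_mem_left _ _ (Ideal.subset_span ⟨_, ⟨a, ha, rfl⟩, rfl⟩)
  · refine Ideal.span_le.mpr ?_
    rintro _ ⟨_, ⟨a, ha, rfl⟩, rfl⟩
    refine (mem_localizedComponent_iff hP).mpr ⟨monomial (a.filter (· ∉ T)) 1, ?_, ?_⟩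
    · rw [monomial_one_mem_iff_of_isPrime hP]
      rintro ⟨i, hi, hiP⟩
      simp only [Finsupp.support_filter, Finset.mem_filter] at hi
      exact hi.2 hiP
    · rw [← monomial_one_eq_mul_filter]
      exact Ideal.subset_span ⟨a, ha, rfl⟩

theorem localizedComponent_pow {I P : Ideal (MvPolynomial σ K)} (hI : IsMonomialIdeal I)
    (hP : P.IsPrime) (s : ℕ) :
    localizedComponent (I ^ s) P hP = localizedComponent I P hP ^ s := by
  rw [localizedComponent_eq_map_evalOneOff (hI.pow s), localizedComponent_eq_map_evalOneOff hI,
    Ideal.map_pow]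

end MvPolynomial

theorem stmt0_general {K : Type*} [Field K] {n : ℕ} (I : Ideal (MvPolynomial (Fin n) K))
    (hI : IsMonomialIdeal I) (s : ℕ) :
    symbolicPower I s =
      ⨅ P : I.minimalPrimes, (localizedComponent I P.1 P.2.1.1) ^ s :=
  iInf_congr fun P => MvPolynomial.localizedComponent_pow hI P.2.1.1 s

/-- for a monomial ideal, the s-th symbolic power equals the
intersection of the s-th powers of the primary components at minimal primes. -/
theorem stmt0 {K : Type*} [Field K] {n : ℕ} (I : Ideal (MvPolynomial (Fin n) K))
    (hI : IsMonomialIdeal I) (s : ℕ) (hs : 1 ≤ s) :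
    symbolicPower I s =
      ⨅ P : I.minimalPrimes, (localizedComponent I P.1 P.2.1.1) ^ s :=
  stmt0_general I hI s
end

section
/- Let I ⊆ S be a support-2 monomial ideal (each minimal generator has the form x_i^a x_j^b with a,b ≥ 1) whose irreducible decomposition is minimal. If for some pair (i,j) there are at least two minimal generators of I supported on {x_i, x_j}, then I^{(2)} ≠ I^2. -/
set_option synthInstance.maxHeartbeats 1000000
set_option maxHeartbeats 1000000

open MvPolynomial

/-!
Let `x_i^{α₁} x_j^{β₁}` and `x_i^{α₂} x_j^{β₂}` be the minimal generators on `{x_i, x_j}` with the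
two smallest `x_i`-exponents, so `α₁ < α₂` and `β₂ < β₁`, and put
`w = x_i^{max(2α₁, α₂)} x_j^{2β₁-1}`.

`w ∉ I²`: two minimal generators whose product divides `w` are supported on `{x_i, x_j}`, and one
of them has `x_j`-exponent `< β₁`, hence `x_i`-exponent `≥ α₂`; the `x_i`-degree of the product is
then `≥ α₁ + α₂ > max(2α₁, α₂)`.

`w ∈ I^{(2)}`: since the irreducible decomposition `I = Q₁ ∩ ⋯ ∩ Q_r` has distinct radicals, a
minimal prime `P` of `I` contains exactly one `Q_k`, and an element of the other components outside
`P` multiplies `Q_k` into `I`, so `Q_k² ⊆ I² S_P ∩ S`. Finally `w ∈ Q_k²`: `Q_k` contains a pure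
power dividing each of the two generators, and in every case two of these powers divide `w`.
-/

open scoped Pointwise

namespace MvPolynomial

section Domain

variable {R : Type*} [CommRing R] [IsDomain R] {σ : Type*}

theorem isPrime_span_X_image (C : Set σ) :
    (Ideal.span (X '' C : Set (MvPolynomial σ R))).IsPrime := by
  classical
  set J := Ideal.span (X '' C : Set (MvPolynomial σ R))
  let φ : MvPolynomial σ R →ₐ[R] MvPolynomial σ R := aeval fun v => if v ∈ C then 0 else X v
  -- `φ` kills the variables in `C` and fixes the others, so it is the identity modulo `J`
  have hφ : (Ideal.Quotient.mkₐ R J).comp φ = Ideal.Quotient.mkₐ R J := by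
    refine algHom_ext fun v => ?_
    by_cases hv : v ∈ C
    · simpa [φ, hv, eq_comm (a := (0 : MvPolynomial σ R ⧸ J)), Ideal.Quotient.eq_zero_iff_mem]
        using (Ideal.subset_span ⟨v, hv, rfl⟩ : X v ∈ J)
    · simp [φ, hv]
  suffices J = RingHom.ker φ from this ▸ RingHom.ker_isPrime φ
  refine le_antisymm (Ideal.span_le.2 ?_) fun f hf => ?_
  · rintro _ ⟨v, hv, rfl⟩
    simp [φ, hv]
  · rw [← Ideal.Quotient.eq_zero_iff_mem, ← Ideal.Quotient.mkₐ_eq_mk R, ← hφ, AlgHom.comp_apply,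
      RingHom.mem_ker.1 hf, map_zero]

theorem radical_span_X_pow_image {t : Set σ} {e : σ → ℕ} (he : ∀ v ∈ t, 1 ≤ e v) :
    (Ideal.span ((fun v => (X v : MvPolynomial σ R) ^ e v) '' t)).radical =
      Ideal.span (X '' t) := by
  refine le_antisymm ((isPrime_span_X_image t).radical_le_iff.2 <| Ideal.span_le.2 ?_)
    (Ideal.span_le.2 ?_)
  · rintro _ ⟨v, hv, rfl⟩
    exact Ideal.pow_mem_of_mem _ (Ideal.subset_span (Set.mem_image_of_mem _ hv)) _ (he v hv)
  · rintro _ ⟨v, hv, rfl⟩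
    exact ⟨e v, Ideal.subset_span (Set.mem_image_of_mem _ hv)⟩

end Domain

variable {R : Type*} [CommSemiring R] [Nontrivial R] {σ : Type*}

theorem monomial_mem_span_monomial_image_iff {A : Set (σ →₀ ℕ)} {m : σ →₀ ℕ} :
    monomial m (1 : R) ∈ Ideal.span ((fun a => monomial a (1 : R)) '' A) ↔ ∃ a ∈ A, a ≤ m := by
  classical
  rw [mem_ideal_span_monomial_image, support_monomial, if_neg one_ne_zero]
  simp

theorem monomial_mem_span_X_pow_image_iff {t : Set σ} {e : σ → ℕ} {m : σ →₀ ℕ} :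
    monomial m (1 : R) ∈ Ideal.span ((fun v => (X v : MvPolynomial σ R) ^ e v) '' t) ↔
      ∃ v ∈ t, e v ≤ m v := by
  have : (fun v => (X v : MvPolynomial σ R) ^ e v) '' t =
      (fun a => monomial a (1 : R)) '' ((fun v => Finsupp.single v (e v)) '' t) := by
    simp only [Set.image_image, X_pow_eq_monomial]
  simp [this, monomial_mem_span_monomial_image_iff, Finsupp.single_le_iff]

end MvPolynomial

namespace Ideal

variable {R : Type*} [CommRing R]

theorem radical_eq_of_le_of_mem_minimalPrimes {I Q P : Ideal R} (hQ : Q.radical.IsPrime)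
    (hIQ : I ≤ Q) (hQP : Q ≤ P) (hP : P ∈ I.minimalPrimes) : Q.radical = P :=
  have hrad : Q.radical ≤ P := hP.1.1.radical_le_iff.2 hQP
  le_antisymm hrad (hP.2 ⟨hQ, hIQ.trans le_radical⟩ hrad)

theorem exists_notMem_mul_mem_of_eq_iInf {ι : Type*} [Fintype ι] [DecidableEq ι]
    {I P : Ideal R} (hP : P.IsPrime) {Q : ι → Ideal R} (hI : I = ⨅ k, Q k) (k₀ : ι)
    (hQ : ∀ k ≠ k₀, ¬Q k ≤ P) : ∃ u ∉ P, ∀ f ∈ Q k₀, u * f ∈ I := by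
  have hprod : ¬∏ k ∈ Finset.univ.erase k₀, Q k ≤ P := by
    rw [hP.prod_le]
    rintro ⟨k, hk, hkP⟩
    exact hQ k (Finset.ne_of_mem_erase hk) hkP
  obtain ⟨u, hu, huP⟩ := SetLike.not_le_iff_exists.1 hprod
  refine ⟨u, huP, fun f hf => hI ▸ mem_iInf.2 fun k => ?_⟩
  by_cases hk : k = k₀
  · exact mul_mem_left _ _ (hk ▸ hf)
  · exact mul_mem_right _ _ (prod_le_inf.trans (Finset.inf_le (by simpa using hk)) hu)

theorem pow_mul_pow_mem_sq {Q : Ideal R} {x y : R} {α₁ α₂ β₁ β₂ : ℕ}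
    (h₁ : x ^ α₁ ∈ Q ∨ y ^ β₁ ∈ Q) (h₂ : x ^ α₂ ∈ Q ∨ y ^ β₂ ∈ Q) (hβ : β₂ < β₁) :
    x ^ max (2 * α₁) α₂ * y ^ (2 * β₁ - 1) ∈ Q ^ 2 := by
  rw [sq]
  rcases h₁ with hx₁ | hy₁
  · refine mem_of_dvd _ ((pow_dvd_pow x (le_max_left _ _)).mul_right _) ?_
    rw [two_mul, pow_add]
    exact mul_mem_mul hx₁ hx₁
  rcases h₂ with hx₂ | hy₂
  · refine mem_of_dvd _ (mul_dvd_mul (pow_dvd_pow x (le_max_right _ _)) (pow_dvd_pow y ?_))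
      (mul_mem_mul hx₂ hy₁)
    omega
  · refine mem_of_dvd _ ((pow_dvd_pow y (by omega : 2 * β₂ ≤ 2 * β₁ - 1)).mul_left _) ?_
    rw [two_mul, pow_add]
    exact mul_mem_mul hy₂ hy₂

end Ideal

section Localization

variable {R : Type*} [CommRing R] {I Q P : Ideal R}

theorem mem_localizedComponent_of_mul_mem (hP : P.IsPrime) {x u : R} (hu : u ∉ P)
    (h : u * x ∈ I) : x ∈ localizedComponent I P hP := by
  rw [localizedComponent, Ideal.mem_comap, IsLocalization.mem_map_algebraMap_iff P.primeCompl]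
  exact ⟨⟨⟨u * x, h⟩, ⟨u, hu⟩⟩, by simp [mul_comm]⟩

theorem pow_le_localizedComponent_pow (hP : P.IsPrime) {u : R} (hu : u ∉ P)
    (hQ : ∀ f ∈ Q, u * f ∈ I) (s : ℕ) : Q ^ s ≤ localizedComponent (I ^ s) P hP := by
  intro x hx
  have hle : (Ideal.span {u} * Q) ^ s ≤ I ^ s :=
    Ideal.pow_right_mono (Ideal.span_singleton_mul_le_iff.2 hQ) s
  rw [mul_pow, Ideal.span_singleton_pow] at hle
  exact mem_localizedComponent_of_mul_mem hP (fun h => hu (hP.mem_of_pow_mem s h))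
    (hle (Ideal.mul_mem_mul (Ideal.mem_span_singleton_self _) hx))

end Localization

section MonomialIdeal

variable {K : Type*} [Field K] {σ : Type*} {I : Ideal (MvPolynomial σ K)}

theorem exists_mem_minGens_le {m : σ →₀ ℕ} (hm : monomial m (1 : K) ∈ I) :
    ∃ g ∈ minGens I, g ≤ m := by
  obtain ⟨g, hgm, hgI, hmin⟩ :=
    exists_minimal_le_of_wellFoundedLT (fun b => monomial b (1 : K) ∈ I) m hm
  exact ⟨g, ⟨hgI, fun b hbI hbg => le_antisymm hbg (hmin hbI hbg)⟩, hgm⟩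

theorem exists_mem_minGens_add_le_of_monomial_mem_sq (hI : IsMonomialIdeal I) {m : σ →₀ ℕ}
    (hm : monomial m (1 : K) ∈ I ^ 2) : ∃ g ∈ minGens I, ∃ h ∈ minGens I, g + h ≤ m := by
  obtain ⟨A, hA⟩ := hI
  have hmemA : ∀ a ∈ A, monomial a (1 : K) ∈ I := fun a ha => hA ▸ Ideal.subset_span ⟨a, ha, rfl⟩
  have hsq : I ^ 2 ≤ Ideal.span ((fun a => monomial a (1 : K)) '' (A + A)) := by
    rw [hA, sq, Ideal.span_mul_span', Ideal.span_le]
    rintro _ ⟨_, ⟨a, ha, rfl⟩, _, ⟨b, hb, rfl⟩, rfl⟩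
    exact Ideal.subset_span ⟨a + b, Set.add_mem_add ha hb, by simp [monomial_mul]⟩
  obtain ⟨_, ⟨a, ha, b, hb, rfl⟩, hle⟩ := monomial_mem_span_monomial_image_iff.1 (hsq hm)
  obtain ⟨g, hg, hga⟩ := exists_mem_minGens_le (hmemA a ha)
  obtain ⟨h, hh, hhb⟩ := exists_mem_minGens_le (hmemA b hb)
  exact ⟨g, hg, h, hh, (add_le_add hga hhb).trans hle⟩

theorem IsIrredMonomialIdeal.isPrime_radical {Q : Ideal (MvPolynomial σ K)}
    (hQ : IsIrredMonomialIdeal Q) : Q.radical.IsPrime := by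
  obtain ⟨t, e, he, rfl⟩ := hQ
  rw [radical_span_X_pow_image he]
  exact isPrime_span_X_image _

theorem IsIrredMonomialIdeal.X_pow_mem_or_X_pow_mem [DecidableEq σ] {Q : Ideal (MvPolynomial σ K)}
    (hQ : IsIrredMonomialIdeal Q) {g : σ →₀ ℕ} {i j : σ} (hg : monomial g (1 : K) ∈ Q)
    (hs : g.support = {i, j}) : X i ^ g i ∈ Q ∨ X j ^ g j ∈ Q := by
  obtain ⟨t, e, he, rfl⟩ := hQ
  obtain ⟨v, hv, hev⟩ := monomial_mem_span_X_pow_image_iff.1 hg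
  have hvg : v ∈ g.support := Finsupp.mem_support_iff.2 (by have := he v hv; omega)
  have hmem : X v ^ g v ∈ Ideal.span ((fun v => (X v : MvPolynomial σ K) ^ e v) '' t) :=
    Ideal.mem_of_dvd _ (pow_dvd_pow _ hev) (Ideal.subset_span (Set.mem_image_of_mem _ hv))
  rw [hs, Finset.mem_insert, Finset.mem_singleton] at hvg
  rcases hvg with rfl | rfl
  exacts [Or.inl hmem, Or.inr hmem]

theorem HasMinimalIrredDecomp.exists_pow_le_localizedComponent (hI : HasMinimalIrredDecomp I)
    {P : Ideal (MvPolynomial σ K)} (hP : P ∈ I.minimalPrimes) :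
    ∃ Q, IsIrredMonomialIdeal Q ∧ I ≤ Q ∧ ∀ s, Q ^ s ≤ localizedComponent (I ^ s) P hP.1.1 := by
  classical
  obtain ⟨r, Q, hirr, hIQ, -, hrad⟩ := hI
  have hle : ∀ k, I ≤ Q k := fun k => hIQ ▸ iInf_le Q k
  obtain ⟨k₀, -, hk₀⟩ :=
    hP.1.1.inf_le'.1 (Finset.inf_univ_eq_iInf Q ▸ hIQ ▸ hP.1.2 : Finset.univ.inf Q ≤ P)
  have hradP : ∀ k, Q k ≤ P → (Q k).radical = P := fun k hk =>
    Ideal.radical_eq_of_le_of_mem_minimalPrimes (hirr k).isPrime_radical (hle k) hk hP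
  obtain ⟨u, hu, hmul⟩ := Ideal.exists_notMem_mul_mem_of_eq_iInf hP.1.1 hIQ k₀
    fun k hk hkP => hrad k k₀ hk ((hradP k hkP).trans (hradP k₀ hk₀).symm)
  exact ⟨Q k₀, hirr k₀, hle k₀, pow_le_localizedComponent_pow hP.1.1 hu hmul⟩

theorem HasMinimalIrredDecomp.mem_symbolicPower (hI : HasMinimalIrredDecomp I)
    {f : MvPolynomial σ K} {s : ℕ} (hf : ∀ Q, IsIrredMonomialIdeal Q → I ≤ Q → f ∈ Q ^ s) :
    f ∈ symbolicPower I s := by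
  refine Submodule.mem_iInf _ |>.2 fun P => ?_
  obtain ⟨Q, hQ, hIQ, hpow⟩ := hI.exists_pow_le_localizedComponent P.2
  exact hpow s (hf Q hQ hIQ)

end MonomialIdeal

section SupportedOn

variable {K : Type*} [Field K] {σ : Type*} [DecidableEq σ] {I : Ideal (MvPolynomial σ K)}
  {i j : σ}

theorem ne_of_mem_supportedOn (hI : IsSupportTwo I) {a : σ →₀ ℕ} (ha : a ∈ supportedOn I i j) :
    i ≠ j := by
  rintro rfl
  simpa [ha.2] using hI a ha.1

theorem eq_of_mem_supportedOn_of_le {g h : σ →₀ ℕ} (hg : g ∈ supportedOn I i j)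
    (hh : h ∈ supportedOn I i j) (hi : g i ≤ h i) (hj : g j ≤ h j) : g = h := by
  refine hh.1.2 g hg.1.1 (Finsupp.le_def.2 fun v => ?_)
  by_cases hv : v ∈ ({i, j} : Finset σ)
  · rcases Finset.mem_insert.1 hv with rfl | hv
    · exact hi
    · rwa [Finset.mem_singleton.1 hv]
  · rw [← hg.2, Finsupp.notMem_support_iff] at hv
    simp [hv]

theorem mem_supportedOn_of_le_single_add_single (hI : IsSupportTwo I) (hij : i ≠ j)
    {g : σ →₀ ℕ} (hg : g ∈ minGens I) {p q : ℕ}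
    (hle : g ≤ Finsupp.single i p + Finsupp.single j q) : g ∈ supportedOn I i j := by
  refine ⟨hg, Finset.eq_of_subset_of_card_le ?_ (by rw [hI g hg, Finset.card_pair hij])⟩
  rw [Finset.insert_eq]
  exact (Finsupp.support_mono hle).trans <| Finsupp.support_add.trans <|
    Finset.union_subset_union Finsupp.support_single_subset Finsupp.support_single_subset

theorem exists_two_least_exponents {a b : σ →₀ ℕ} (ha : a ∈ supportedOn I i j)
    (hb : b ∈ supportedOn I i j) (hab : a ≠ b) :
    ∃ g₁ ∈ supportedOn I i j, ∃ g₂ ∈ supportedOn I i j,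
      (∀ g ∈ supportedOn I i j, g₁ i ≤ g i) ∧ g₁ i < g₂ i ∧ g₂ j < g₁ j ∧
      ∀ g ∈ supportedOn I i j, g j < g₁ j → g₂ i ≤ g i := by
  set S := supportedOn I i j
  set g₁ := Function.argminOn (· i) S ⟨a, ha⟩
  have hg₁ : g₁ ∈ S := Function.argminOn_mem _ _ _
  have hmin : ∀ g ∈ S, g₁ i ≤ g i := fun g hg => Function.argminOn_le (· i) S hg
  have hi_inj : ∀ g ∈ S, ∀ h ∈ S, g i = h i → g = h := fun g hg h hh hgh =>
    (le_total (g j) (h j)).elim (eq_of_mem_supportedOn_of_le hg hh hgh.le)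
      fun hj => (eq_of_mem_supportedOn_of_le hh hg hgh.ge hj).symm
  have hne : {g | g ∈ S ∧ g₁ i < g i}.Nonempty := by
    by_cases hai : g₁ i < a i
    · exact ⟨a, ha, hai⟩
    · refine ⟨b, hb, lt_of_le_of_ne (hmin b hb) fun hbi => hab (hi_inj a ha b hb ?_)⟩
      have ha₁ := hmin a ha
      omega
  set g₂ := Function.argminOn (· i) _ hne
  obtain ⟨hg₂, hlt⟩ : g₂ ∈ {g | g ∈ S ∧ g₁ i < g i} := Function.argminOn_mem _ _ _
  have hgt : ∀ g ∈ S, g j < g₁ j → g₁ i < g i := fun g hg hgj =>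
    lt_of_le_of_ne (hmin g hg) fun hgi =>
      hgj.ne (congrArg (· j) (eq_of_mem_supportedOn_of_le hg hg₁ hgi.ge hgj.le))
  refine ⟨g₁, hg₁, g₂, hg₂, hmin, hlt, ?_, fun g hg hgj =>
    Function.argminOn_le (· i) {g | g ∈ S ∧ g₁ i < g i} ⟨hg, hgt g hg hgj⟩⟩
  by_contra! hj
  exact hlt.ne (congrArg (· i) (eq_of_mem_supportedOn_of_le hg₁ hg₂ hlt.le hj))

theorem X_pow_mul_X_pow_notMem_sq (hmon : IsMonomialIdeal I) (hI : IsSupportTwo I) (hij : i ≠ j)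
    {g₁ : σ →₀ ℕ} {α : ℕ} (hg₁ : g₁ ∈ supportedOn I i j)
    (hmin : ∀ g ∈ supportedOn I i j, g₁ i ≤ g i)
    (hnext : ∀ g ∈ supportedOn I i j, g j < g₁ j → α ≤ g i) (hα : g₁ i < α) :
    X i ^ max (2 * g₁ i) α * X j ^ (2 * g₁ j - 1) ∉ I ^ 2 := by
  set w := Finsupp.single i (max (2 * g₁ i) α) + Finsupp.single j (2 * g₁ j - 1)
  have hw : (X i ^ max (2 * g₁ i) α * X j ^ (2 * g₁ j - 1) : MvPolynomial σ K) = monomial w 1 := by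
    simp [w, X_pow_eq_monomial, monomial_mul]
  rw [hw]
  intro hmem
  obtain ⟨g, hg, h, hh, hle⟩ := exists_mem_minGens_add_le_of_monomial_mem_sq hmon hmem
  have hgS := mem_supportedOn_of_le_single_add_single hI hij hg (le_self_add.trans hle)
  have hhS := mem_supportedOn_of_le_single_add_single hI hij hh (le_add_self.trans hle)
  have hwi : g i + h i ≤ max (2 * g₁ i) α := by simpa [w, hij] using Finsupp.le_def.1 hle i
  have hwj : g j + h j ≤ 2 * g₁ j - 1 := by simpa [w, hij.symm] using Finsupp.le_def.1 hle j
  have hg₁i : g₁ i ≠ 0 := Finsupp.mem_support_iff.1 (by simp [hg₁.2])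
  have hg₁j : g₁ j ≠ 0 := Finsupp.mem_support_iff.1 (by simp [hg₁.2])
  -- one of the two factors has `x_j`-exponent below `g₁ j`, hence `x_i`-exponent at least `α`
  rcases lt_or_ge (g j) (g₁ j) with hgj | hgj
  · have hgi := hnext g hgS hgj
    have hhi := hmin h hhS
    omega
  · have hhi := hnext h hhS (by omega)
    have hgi := hmin g hgS
    omega

end SupportedOn

theorem stmt1 {K : Type*} [Field K] {n : ℕ} (I : Ideal (MvPolynomial (Fin n) K))
    (hmon : IsMonomialIdeal I) (h2 : IsSupportTwo I) (hdec : HasMinimalIrredDecomp I)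
    (i j : Fin n) (a b : Fin n →₀ ℕ) (ha : a ∈ supportedOn I i j)
    (hb : b ∈ supportedOn I i j) (hab : a ≠ b) :
    symbolicPower I 2 ≠ I ^ 2 := by
  have hij := ne_of_mem_supportedOn h2 ha
  obtain ⟨g₁, hg₁, g₂, hg₂, hmin, hlt, hβ, hnext⟩ := exists_two_least_exponents ha hb hab
  have hsymb : X i ^ max (2 * g₁ i) (g₂ i) * X j ^ (2 * g₁ j - 1) ∈ symbolicPower I 2 :=
    hdec.mem_symbolicPower fun Q hQ hIQ => Ideal.pow_mul_pow_mem_sq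
      (hQ.X_pow_mem_or_X_pow_mem (hIQ hg₁.1.1) hg₁.2)
      (hQ.X_pow_mem_or_X_pow_mem (hIQ hg₂.1.1) hg₂.2) hβ
  exact fun h => X_pow_mul_X_pow_notMem_sq hmon h2 hij hg₁ hmin hnext hlt (h ▸ hsymb)
end

section
/- Let I = ⟨x1 x2², x2 x3, x3² x4⟩ ⊆ K[x1,x2,x3,x4], with minimal primes P1 = ⟨x1,x3⟩ and P2 = ⟨x2,x4⟩ and third primary component Q3 = ⟨x2², x2 x3, x3²⟩ (with radical ⟨x2,x3⟩). Then for all s ≥ 1, I^s = P1^s ∩ P2^s ∩ Q3^s; that is, I is a Simis ideal. -/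
set_option synthInstance.maxHeartbeats 1000000
set_option maxHeartbeats 1000000

open MvPolynomial

/-!
All ideals involved are monomial ideals, so it suffices to compare monomials `x^a`
(variables indexed from `0`, like `X 0, …, X 3`). Since `Q3 = ⟨x₁, x₂⟩²`, the monomial `x^a` lies in
`Q1^s ∩ Q2^s ∩ Q3^s` exactly when `a₀ + a₂ ≥ s`, `a₁ + a₃ ≥ s` and `a₁ + a₂ ≥ 2s`. These
inequalities allow a choice `p + q + r = s` with `(x₀x₁²)^p (x₁x₂)^q (x₂²x₃)^r ∣ x^a`, and that
product lies in `I^s`.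
-/

namespace MvPolynomial

variable {σ R : Type*} [CommSemiring R]

lemma mem_of_forall_monomial_mem {J : Ideal (MvPolynomial σ R)} {f : MvPolynomial σ R}
    (h : ∀ a ∈ f.support, monomial a (1 : R) ∈ J) : f ∈ J := by
  rw [f.as_sum]
  refine J.sum_mem fun a ha => ?_
  rw [← mul_one (coeff a f), ← C_mul_monomial]
  exact J.mul_mem_left _ (h a ha)

noncomputable def degreeOnGEIdeal (T : Finset σ) (n : ℕ) : Ideal (MvPolynomial σ R) :=
  Ideal.span ((fun a => monomial a (1 : R)) '' {a | n ≤ ∑ i ∈ T, a i})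

lemma mem_degreeOnGEIdeal {T : Finset σ} {n : ℕ} {f : MvPolynomial σ R} :
    f ∈ degreeOnGEIdeal T n ↔ ∀ a ∈ f.support, n ≤ ∑ i ∈ T, a i := by
  rw [degreeOnGEIdeal, mem_ideal_span_monomial_image]
  refine forall₂_congr fun a _ => ⟨?_, fun h => ⟨a, h, le_rfl⟩⟩
  rintro ⟨b, hb, hba⟩
  exact hb.trans (Finset.sum_le_sum fun i _ => hba i)

lemma degreeOnGEIdeal_mul_le (T : Finset σ) (m n : ℕ) :
    degreeOnGEIdeal T m * degreeOnGEIdeal T n ≤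
      (degreeOnGEIdeal T (m + n) : Ideal (MvPolynomial σ R)) := by
  classical
  refine Ideal.mul_le.2 fun f hf g hg => mem_degreeOnGEIdeal.2 fun a ha => ?_
  obtain ⟨b, hb, c, hc, rfl⟩ := Finset.mem_add.1 (support_mul f g ha)
  rw [Finset.sum_congr rfl fun i _ => Finsupp.add_apply b c i, Finset.sum_add_distrib]
  exact add_le_add (mem_degreeOnGEIdeal.1 hf b hb) (mem_degreeOnGEIdeal.1 hg c hc)

lemma span_X_pow_le_degreeOnGEIdeal (T : Finset σ) (n : ℕ) :
    Ideal.span (X '' (T : Set σ)) ^ n ≤ (degreeOnGEIdeal T n : Ideal (MvPolynomial σ R)) := by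
  induction n with
  | zero =>
    rw [pow_zero, Ideal.one_eq_top, top_le_iff, Ideal.eq_top_iff_one]
    exact mem_degreeOnGEIdeal.2 fun _ _ => Nat.zero_le _
  | succ n ih =>
    have hX : Ideal.span (X '' (T : Set σ)) ≤ (degreeOnGEIdeal T 1 : Ideal (MvPolynomial σ R)) := by
      rw [Ideal.span_le]
      rintro _ ⟨i, hi, rfl⟩
      refine Ideal.subset_span ⟨Finsupp.single i 1, ?_, rfl⟩
      classical
      simp [Finsupp.single_apply, Finset.mem_coe.1 hi]
    rw [pow_succ]
    exact (Ideal.mul_mono ih hX).trans (degreeOnGEIdeal_mul_le T n 1)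

lemma le_add_of_mem_span_X_pair_pow {i j : σ} (hij : i ≠ j) {n : ℕ} {f : MvPolynomial σ R}
    (hf : f ∈ Ideal.span {X i, X j} ^ n) {a : σ →₀ ℕ} (ha : a ∈ f.support) : n ≤ a i + a j := by
  classical
  rw [← Set.image_pair, ← Finset.coe_pair] at hf
  rw [← Finset.sum_pair hij]
  exact mem_degreeOnGEIdeal.1 (span_X_pow_le_degreeOnGEIdeal _ n hf) a ha

lemma span_X_sq_X_mul_X_sq_le (i j : σ) :
    Ideal.span {X i ^ 2, X i * X j, X j ^ 2} ≤
      (Ideal.span {X i, X j} ^ 2 : Ideal (MvPolynomial σ R)) := by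
  rw [Ideal.span_le, sq (Ideal.span _)]
  rintro _ (rfl | rfl | rfl) <;> [rw [sq]; skip; rw [sq]] <;>
    exact Ideal.mul_mem_mul (Ideal.subset_span (by simp)) (Ideal.subset_span (by simp))

end MvPolynomial

lemma exists_exponents_of_le (a b c d s : ℕ) (h1 : s ≤ a + c) (h2 : s ≤ b + d)
    (h3 : 2 * s ≤ b + c) :
    ∃ p q r : ℕ, p + q + r = s ∧ p ≤ a ∧ 2 * p + q ≤ b ∧ q + 2 * r ≤ c ∧ r ≤ d := by
  -- If `s ≤ c`, take no `x₀x₁²` and as many `x₂²x₃` as the bounds allow; otherwise no `x₂²x₃`.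
  rcases le_or_gt s c with h | h
  · exact ⟨0, s - min (min d s) (c - s), min (min d s) (c - s), by omega⟩
  · exact ⟨s - c, c, 0, by omega⟩

lemma monomial_mem_span_pow_of_exponent_bounds {R : Type*} [CommSemiring R] {s : ℕ}
    {a : Fin 4 →₀ ℕ} (h02 : s ≤ a 0 + a 2) (h13 : s ≤ a 1 + a 3) (h12 : 2 * s ≤ a 1 + a 2) :
    monomial a (1 : R) ∈ Ideal.span {X 0 * X 1 ^ 2, X 1 * X 2, X 2 ^ 2 * X 3} ^ s := by
  obtain ⟨p, q, r, rfl, hp, hq, hr, hd⟩ := exists_exponents_of_le _ _ _ _ s h02 h13 h12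
  obtain ⟨k0, hk0⟩ := Nat.exists_eq_add_of_le hp
  obtain ⟨k1, hk1⟩ := Nat.exists_eq_add_of_le hq
  obtain ⟨k2, hk2⟩ := Nat.exists_eq_add_of_le hr
  obtain ⟨k3, hk3⟩ := Nat.exists_eq_add_of_le hd
  have hfactor : monomial a (1 : R) = (X 0 * X 1 ^ 2) ^ p * (X 1 * X 2) ^ q * (X 2 ^ 2 * X 3) ^ r *
      (X 0 ^ k0 * X 1 ^ k1 * X 2 ^ k2 * X 3 ^ k3) := by
    rw [monomial_eq, C_1, one_mul, Finsupp.prod_fintype _ _ fun _ => pow_zero _,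
      Fin.prod_univ_four, hk0, hk1, hk2, hk3]
    ring
  rw [hfactor, pow_add, pow_add]
  exact Ideal.mul_mem_right _ _ <| Ideal.mul_mem_mul
    (Ideal.mul_mem_mul (Ideal.pow_mem_pow (Ideal.subset_span (by simp)) p)
      (Ideal.pow_mem_pow (Ideal.subset_span (by simp)) q))
    (Ideal.pow_mem_pow (Ideal.subset_span (by simp)) r)

lemma span_generators_le_components {R : Type*} [CommSemiring R] :
    Ideal.span {X 0 * X 1 ^ 2, X 1 * X 2, X 2 ^ 2 * X 3} ≤
      Ideal.span {X 0, X 2} ⊓ Ideal.span {X 1, X 3} ⊓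
        (Ideal.span {X 1 ^ 2, X 1 * X 2, X 2 ^ 2} : Ideal (MvPolynomial (Fin 4) R)) := by
  have mem {g x : MvPolynomial (Fin 4) R} {S : Set (MvPolynomial (Fin 4) R)} (hg : g ∈ S)
      (hgx : g ∣ x) : x ∈ Ideal.span S :=
    Ideal.mem_of_dvd _ hgx (Ideal.subset_span hg)
  rw [Ideal.span_le]
  rintro _ (rfl | rfl | rfl) <;> refine ⟨⟨?_, ?_⟩, ?_⟩
  · exact mem (g := X 0) (by simp) (dvd_mul_right _ _)
  · exact mem (g := X 1) (by simp) ((dvd_pow_self _ two_ne_zero).mul_left _)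
  · exact mem (g := X 1 ^ 2) (by simp) (dvd_mul_left _ _)
  · exact mem (g := X 2) (by simp) (dvd_mul_left _ _)
  · exact mem (g := X 1) (by simp) (dvd_mul_right _ _)
  · exact mem (g := X 1 * X 2) (by simp) dvd_rfl
  · exact mem (g := X 2) (by simp) ((dvd_pow_self _ two_ne_zero).mul_right _)
  · exact mem (g := X 3) (by simp) (dvd_mul_left _ _)
  · exact mem (g := X 2 ^ 2) (by simp) (dvd_mul_right _ _)

theorem stmt10 {K : Type*} [Field K]
    (I Q1 Q2 Q3 : Ideal (MvPolynomial (Fin 4) K))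
    (hI : I = Ideal.span {X 0 * X 1 ^ 2, X 1 * X 2, X 2 ^ 2 * X 3})
    (hQ1 : Q1 = Ideal.span {X 0, X 2})
    (hQ2 : Q2 = Ideal.span {X 1, X 3})
    (hQ3 : Q3 = Ideal.span {X 1 ^ 2, X 1 * X 2, X 2 ^ 2}) :
    ∀ s : ℕ, 1 ≤ s → I ^ s = Q1 ^ s ⊓ Q2 ^ s ⊓ Q3 ^ s := by
  intro s _
  subst hI hQ1 hQ2 hQ3
  have hI_le := span_generators_le_components (R := K)
  refine le_antisymm (le_inf (le_inf ?_ ?_) ?_) fun f hf => ?_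
  · exact Ideal.pow_right_mono (hI_le.trans (inf_le_left.trans inf_le_left)) s
  · exact Ideal.pow_right_mono (hI_le.trans (inf_le_left.trans inf_le_right)) s
  · exact Ideal.pow_right_mono (hI_le.trans inf_le_right) s
  obtain ⟨⟨hf1, hf2⟩, hf3⟩ := hf
  have hf3' : f ∈ Ideal.span {X 1, X 2} ^ (2 * s) := by
    rw [pow_mul]
    exact Ideal.pow_right_mono (span_X_sq_X_mul_X_sq_le 1 2) s hf3
  refine mem_of_forall_monomial_mem fun a ha => monomial_mem_span_pow_of_exponent_bounds ?_ ?_ ?_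
  · exact le_add_of_mem_span_X_pair_pow (by decide) hf1 ha
  · exact le_add_of_mem_span_X_pair_pow (by decide) hf2 ha
  · exact le_add_of_mem_span_X_pair_pow (by decide) hf3' ha
end

section
/- Let I = ⟨x1 x2⁴, x2⁴ x3, x2 x3⁴, x3⁴ x4⟩ ⊆ K[x1,x2,x3,x4]. Then I = ⟨x1, x3⟩ ∩ ⟨x2, x4⟩ ∩ ⟨x2⁴, x3⁴⟩ is its irreducible decomposition (which is minimal), and the monomial x2⁴ x3⁴ lies in I^{(2)} = (⟨x1,x3⟩² ∩ ⟨x2,x4⟩² ∩ ⟨x2⁴,x3⁴⟩²) but not in I², so I^{(2)} ≠ I². -/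
set_option synthInstance.maxHeartbeats 1000000
set_option maxHeartbeats 1000000

open MvPolynomial

/-!
All generators of `I` have degree 5, so `I ≤ 𝔪 ^ 5` and `I ^ 2 ≤ 𝔪 ^ 10` for the ideal `𝔪` of the
variables; this degree bound excludes `x₂⁴x₃⁴` (degree 8) from `I ^ 2` and the smaller witnesses of
irredundancy from `I`, while `x₂⁴x₃⁴` visibly lies in each `Qᵢ ^ 2`. The equality
`I = Q₁ ⊓ Q₂ ⊓ Q₃` is checked on exponent vectors, since a polynomial lies in a monomial ideal iff
each of its monomials is divisible by a generator. The radicals are told apart by evaluating at a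
coordinate vector, which kills one ideal but not a variable lying in the other.
-/

theorem Finsupp.single_add_single_le_iff {σ α : Type*} [AddCommMonoid α] [PartialOrder α]
    [CanonicallyOrderedAdd α] {i j : σ} (hij : i ≠ j) {a b : α} {m : σ →₀ α} :
    single i a + single j b ≤ m ↔ a ≤ m i ∧ b ≤ m j := by
  classical
  constructor
  · intro h
    have hi := h i
    have hj := h j
    simp_all [hij.symm]
  · rintro ⟨hi, hj⟩ k
    by_cases hki : k = i <;> by_cases hkj : k = j <;> simp_all [Ne.symm]

namespace MvPolynomial

open Finsupp

variable {σ R : Type*}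

section CommSemiring

variable [CommSemiring R]

theorem X_pow_mul_X_pow_eq_monomial (i j : σ) (a b : ℕ) :
    (X i ^ a * X j ^ b : MvPolynomial σ R) = monomial (single i a + single j b) 1 := by
  rw [X_pow_eq_monomial, X_pow_eq_monomial, monomial_mul, one_mul]

theorem span_X_pow_pair_eq_span_monomial_image (i j : σ) (a b : ℕ) :
    (Ideal.span {X i ^ a, X j ^ b} : Ideal (MvPolynomial σ R)) =
      Ideal.span ((monomial · 1) '' {single i a, single j b}) := by
  simp only [Set.image_insert_eq, Set.image_singleton, ← X_pow_eq_monomial]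

theorem span_X_pair_eq_span_monomial_image (i j : σ) :
    (Ideal.span {X i, X j} : Ideal (MvPolynomial σ R)) =
      Ideal.span ((monomial · 1) '' {single i 1, single j 1}) := by
  simpa using span_X_pow_pair_eq_span_monomial_image (R := R) i j 1 1

theorem X_pow_mul_X_pow_mem_pow_idealOfVars (i j : σ) (a b : ℕ) :
    (X i ^ a * X j ^ b : MvPolynomial σ R) ∈ idealOfVars σ R ^ (a + b) := by
  rw [pow_add]
  exact Ideal.mul_mem_mul (Ideal.pow_mem_pow (Ideal.subset_span (Set.mem_range_self i)) a)
    (Ideal.pow_mem_pow (Ideal.subset_span (Set.mem_range_self j)) b)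

theorem X_pow_mul_X_pow_notMem_of_le_pow_idealOfVars [Nontrivial R]
    {I : Ideal (MvPolynomial σ R)} {n : ℕ} (hI : I ≤ idealOfVars σ R ^ n) (i j : σ)
    {a b : ℕ} (hab : a + b < n) : X i ^ a * X j ^ b ∉ I := by
  rw [X_pow_mul_X_pow_eq_monomial]
  intro h
  have := (monomial_mem_pow_idealOfVars_iff n _ one_ne_zero).1 (hI h)
  simp only [map_add, degree_single] at this
  omega

end CommSemiring

theorem radical_ne_radical_of_X_mem_of_le_ker_eval [CommRing R] [IsDomain R]
    {P Q : Ideal (MvPolynomial σ R)} {i : σ} (hP : X i ∈ P) {f : σ → R}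
    (hQ : Q ≤ RingHom.ker (eval f)) (hi : f i ≠ 0) : P.radical ≠ Q.radical := by
  refine ne_of_mem_of_not_mem' (Ideal.le_radical hP) fun h => hi ?_
  simpa using (RingHom.ker_isPrime (eval f)).radical_le_iff.2 hQ h

theorem isIrredMonomialIdeal_span_X_pow_pair {K : Type*} [Field K] [DecidableEq σ] {i j : σ}
    (hij : i ≠ j) {a b : ℕ} (ha : 1 ≤ a) (hb : 1 ≤ b) :
    IsIrredMonomialIdeal (Ideal.span {X i ^ a, X j ^ b} : Ideal (MvPolynomial σ K)) := by
  refine ⟨{i, j}, fun k => if k = i then a else b, fun k _ => ?_, ?_⟩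
  · dsimp only
    split_ifs <;> assumption
  · simp [Set.image_insert_eq, hij.symm]

theorem isIrredMonomialIdeal_span_X_pair {K : Type*} [Field K] [DecidableEq σ] {i j : σ}
    (hij : i ≠ j) : IsIrredMonomialIdeal (Ideal.span {X i, X j} : Ideal (MvPolynomial σ K)) := by
  simpa using isIrredMonomialIdeal_span_X_pow_pair (K := K) hij le_rfl le_rfl

end MvPolynomial

section Example

open MvPolynomial Finsupp

variable {K : Type*} [Field K]

theorem span_gens_eq_inf :
    (Ideal.span {X 0 * X 1 ^ 4, X 1 ^ 4 * X 2, X 1 * X 2 ^ 4, X 2 ^ 4 * X 3} :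
      Ideal (MvPolynomial (Fin 4) K)) =
      Ideal.span {X 0, X 2} ⊓ Ideal.span {X 1, X 3} ⊓ Ideal.span {X 1 ^ 4, X 2 ^ 4} := by
  have hI : (Ideal.span {X 0 * X 1 ^ 4, X 1 ^ 4 * X 2, X 1 * X 2 ^ 4, X 2 ^ 4 * X 3} :
      Ideal (MvPolynomial (Fin 4) K)) = Ideal.span ((monomial · 1) ''
        {single 0 1 + single 1 4, single 1 4 + single 2 1, single 1 1 + single 2 4,
          single 2 4 + single 3 1}) := by
    simp only [Set.image_insert_eq, Set.image_singleton, ← X_pow_mul_X_pow_eq_monomial, pow_one]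
  ext p
  rw [hI, span_X_pair_eq_span_monomial_image, span_X_pair_eq_span_monomial_image,
    span_X_pow_pair_eq_span_monomial_image]
  simp only [Submodule.mem_inf, mem_ideal_span_monomial_image, ← forall_and]
  refine forall₂_congr fun m _ => ?_
  simp only [Set.mem_insert_iff, Set.mem_singleton_iff, exists_eq_or_imp, exists_eq_left,
    single_le_iff, single_add_single_le_iff (by decide : (0 : Fin 4) ≠ 1),
    single_add_single_le_iff (by decide : (1 : Fin 4) ≠ 2),
    single_add_single_le_iff (by decide : (2 : Fin 4) ≠ 3)]
  omega

theorem span_gens_le_pow_idealOfVars :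
    (Ideal.span {X 0 * X 1 ^ 4, X 1 ^ 4 * X 2, X 1 * X 2 ^ 4, X 2 ^ 4 * X 3} :
      Ideal (MvPolynomial (Fin 4) K)) ≤ idealOfVars (Fin 4) K ^ 5 := by
  simp only [Ideal.span_le, Set.insert_subset_iff, Set.singleton_subset_iff, SetLike.mem_coe]
  refine ⟨?_, ?_, ?_, ?_⟩
  · simpa using X_pow_mul_X_pow_mem_pow_idealOfVars (R := K) 0 1 1 4
  · simpa using X_pow_mul_X_pow_mem_pow_idealOfVars (R := K) 1 2 4 1
  · simpa using X_pow_mul_X_pow_mem_pow_idealOfVars (R := K) 1 2 1 4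
  · simpa using X_pow_mul_X_pow_mem_pow_idealOfVars (R := K) 2 3 4 1

theorem inf_pairs_ne_span_gens :
    Ideal.span {X 0, X 2} ⊓ Ideal.span {X 1, X 3} ≠
        (Ideal.span {X 0 * X 1 ^ 4, X 1 ^ 4 * X 2, X 1 * X 2 ^ 4, X 2 ^ 4 * X 3} :
          Ideal (MvPolynomial (Fin 4) K)) ∧
      Ideal.span {X 0, X 2} ⊓ Ideal.span {X 1 ^ 4, X 2 ^ 4} ≠
        (Ideal.span {X 0 * X 1 ^ 4, X 1 ^ 4 * X 2, X 1 * X 2 ^ 4, X 2 ^ 4 * X 3} :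
          Ideal (MvPolynomial (Fin 4) K)) ∧
      Ideal.span {X 1, X 3} ⊓ Ideal.span {X 1 ^ 4, X 2 ^ 4} ≠
        (Ideal.span {X 0 * X 1 ^ 4, X 1 ^ 4 * X 2, X 1 * X 2 ^ 4, X 2 ^ 4 * X 3} :
          Ideal (MvPolynomial (Fin 4) K)) := by
  have hI := span_gens_le_pow_idealOfVars (K := K)
  refine ⟨ne_of_mem_of_not_mem' (a := X 0 * X 1) (Ideal.mem_inf.2
      ⟨Ideal.mul_mem_right _ _ (Ideal.subset_span (by simp)),
        Ideal.mul_mem_left _ _ (Ideal.subset_span (by simp))⟩) ?_,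
    ne_of_mem_of_not_mem' (a := X 2 ^ 4) (Ideal.mem_inf.2
      ⟨Ideal.pow_mem_of_mem _ (Ideal.subset_span (by simp)) _ (by norm_num),
        Ideal.subset_span (by simp)⟩) ?_,
    ne_of_mem_of_not_mem' (a := X 1 ^ 4) (Ideal.mem_inf.2
      ⟨Ideal.pow_mem_of_mem _ (Ideal.subset_span (by simp)) _ (by norm_num),
        Ideal.subset_span (by simp)⟩) ?_⟩
  · simpa using X_pow_mul_X_pow_notMem_of_le_pow_idealOfVars hI 0 1 (a := 1) (b := 1) (by norm_num)
  · simpa using X_pow_mul_X_pow_notMem_of_le_pow_idealOfVars hI 2 2 (a := 4) (b := 0) (by norm_num)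
  · simpa using X_pow_mul_X_pow_notMem_of_le_pow_idealOfVars hI 1 1 (a := 4) (b := 0) (by norm_num)

theorem X_one_pow_four_mul_X_two_pow_four_mem_inf_sq :
    (X 1 ^ 4 * X 2 ^ 4 : MvPolynomial (Fin 4) K) ∈
      Ideal.span {X 0, X 2} ^ 2 ⊓ Ideal.span {X 1, X 3} ^ 2 ⊓
        Ideal.span {X 1 ^ 4, X 2 ^ 4} ^ 2 := by
  refine ⟨⟨?_, ?_⟩, ?_⟩
  · exact Ideal.mem_of_dvd _ ((pow_dvd_pow (X 2) (by norm_num)).mul_left _)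
      (Ideal.pow_mem_pow (Ideal.subset_span (by simp)) 2)
  · exact Ideal.mem_of_dvd _ ((pow_dvd_pow (X 1) (by norm_num)).mul_right _)
      (Ideal.pow_mem_pow (Ideal.subset_span (by simp)) 2)
  · rw [pow_two]
    exact Ideal.mul_mem_mul (Ideal.subset_span (by simp)) (Ideal.subset_span (by simp))

theorem X_one_pow_four_mul_X_two_pow_four_notMem_sq :
    (X 1 ^ 4 * X 2 ^ 4 : MvPolynomial (Fin 4) K) ∉
      Ideal.span {X 0 * X 1 ^ 4, X 1 ^ 4 * X 2, X 1 * X 2 ^ 4, X 2 ^ 4 * X 3} ^ 2 :=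
  X_pow_mul_X_pow_notMem_of_le_pow_idealOfVars
    ((Ideal.pow_right_mono span_gens_le_pow_idealOfVars 2).trans (pow_mul _ 5 2).symm.le) 1 2
    (by norm_num)

end Example

theorem stmt11 {K : Type*} [Field K]
    (I Q1 Q2 Q3 : Ideal (MvPolynomial (Fin 4) K))
    (hI : I = Ideal.span {X 0 * X 1 ^ 4, X 1 ^ 4 * X 2, X 1 * X 2 ^ 4, X 2 ^ 4 * X 3})
    (hQ1 : Q1 = Ideal.span {X 0, X 2})
    (hQ2 : Q2 = Ideal.span {X 1, X 3})
    (hQ3 : Q3 = Ideal.span {X 1 ^ 4, X 2 ^ 4}) :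
    I = Q1 ⊓ Q2 ⊓ Q3 ∧
    IsIrredMonomialIdeal Q1 ∧ IsIrredMonomialIdeal Q2 ∧ IsIrredMonomialIdeal Q3 ∧
    Q1.radical ≠ Q2.radical ∧ Q1.radical ≠ Q3.radical ∧ Q2.radical ≠ Q3.radical ∧
    Q1 ⊓ Q2 ≠ I ∧ Q1 ⊓ Q3 ≠ I ∧ Q2 ⊓ Q3 ≠ I ∧
    (X 1 ^ 4 * X 2 ^ 4 : MvPolynomial (Fin 4) K) ∈ Q1 ^ 2 ⊓ Q2 ^ 2 ⊓ Q3 ^ 2 ∧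
    (X 1 ^ 4 * X 2 ^ 4 : MvPolynomial (Fin 4) K) ∉ I ^ 2 ∧
    Q1 ^ 2 ⊓ Q2 ^ 2 ⊓ Q3 ^ 2 ≠ I ^ 2 := by
  subst hI hQ1 hQ2 hQ3
  have hsq := X_one_pow_four_mul_X_two_pow_four_mem_inf_sq (K := K)
  have hnsq := X_one_pow_four_mul_X_two_pow_four_notMem_sq (K := K)
  obtain ⟨h12, h13, h23⟩ := inf_pairs_ne_span_gens (K := K)
  refine ⟨span_gens_eq_inf, isIrredMonomialIdeal_span_X_pair (by decide),
    isIrredMonomialIdeal_span_X_pair (by decide),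
    isIrredMonomialIdeal_span_X_pow_pair (by decide) (by norm_num) (by norm_num), ?_, ?_, ?_,
    h12, h13, h23, hsq, hnsq, fun h => hnsq (h ▸ hsq)⟩
  · exact radical_ne_radical_of_X_mem_of_le_ker_eval (i := 0) (Ideal.subset_span (by simp))
      (f := Pi.single 0 1) (by simp [Ideal.span_le, Set.insert_subset_iff]) (by simp)
  · exact radical_ne_radical_of_X_mem_of_le_ker_eval (i := 0) (Ideal.subset_span (by simp))
      (f := Pi.single 0 1) (by simp [Ideal.span_le, Set.insert_subset_iff]) (by simp)
  · exact radical_ne_radical_of_X_mem_of_le_ker_eval (i := 3) (Ideal.subset_span (by simp))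
      (f := Pi.single 3 1) (by simp [Ideal.span_le, Set.insert_subset_iff]) (by simp)
end

section
/- Let I = ⟨x1 x2, x2 x3², x3 x4, x4² x5, x5 x1⟩ ⊆ K[x1,...,x5] (a support-2 monomial ideal whose underlying graph is the 5-cycle). Then I has the minimal primary decomposition I = ⟨x1,x2,x4⟩ ∩ ⟨x2,x3,x5⟩ ∩ ⟨x2,x4,x5⟩ ∩ ⟨x1,x3,x5⟩ ∩ ⟨x1, x3², x3 x4, x4²⟩, and I^{(s)} = I^s for all s ≥ 1. -/
set_option synthInstance.maxHeartbeats 1000000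
set_option maxHeartbeats 1000000

open MvPolynomial

/-! Each component `Q k` is a weighted order ideal: the polynomials all of whose monomials have
`w`-weight at least `d`, where `w` is the indicator vector of a vertex cover and `d = 1` for the
four primes, and `w = (2,0,1,1,0)`, `d = 2` for `⟨x₀, x₂², x₂x₃, x₃²⟩` (variables indexed from
`0`). The weighted order is additive on products over a domain, so such an ideal is primary with
radical `{weight ≥ 1}`, and `(Q k)^s` only contains polynomials whose monomials have weight at
least `s * d`.

Hence every monomial `x^c` of a polynomial in `⋂ (Q k)^s` satisfies five linear inequalities in
`c`. By induction on `s`, one of the five generators of `I` divides `x^c` so that the quotient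
still satisfies the inequalities for `s - 1`; thus `x^c` is a product of `s` generators times a
monomial, i.e. `x^c ∈ I^s`. The reverse inclusion holds because `I ≤ Q k` for every `k`. -/

namespace MvPolynomial

variable {σ R : Type*} [CommSemiring R]

-- Phrased through power series so that `MvPowerSeries.weightedOrder_mul` applies.
noncomputable def weightedOrderIdeal (w : σ → ℕ) (k : ℕ) : Ideal (MvPolynomial σ R) where
  carrier := {f | (k : ℕ∞) ≤ (f : MvPowerSeries σ R).weightedOrder w}
  add_mem' {f g} hf hg := by
    change (k : ℕ∞) ≤ _
    rw [coe_add]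
    exact (le_min hf hg).trans (MvPowerSeries.min_weightedOrder_le_add w)
  zero_mem' := by simp
  smul_mem' c f hf := by
    change (k : ℕ∞) ≤ _
    rw [smul_eq_mul, coe_mul]
    exact hf.trans (le_add_self.trans (MvPowerSeries.le_weightedOrder_mul w))

variable {w : σ → ℕ} {k : ℕ}

theorem mem_weightedOrderIdeal {f : MvPolynomial σ R} :
    f ∈ weightedOrderIdeal w k ↔ (k : ℕ∞) ≤ (f : MvPowerSeries σ R).weightedOrder w :=
  Iff.rfl

theorem mem_weightedOrderIdeal_iff_support {f : MvPolynomial σ R} :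
    f ∈ weightedOrderIdeal w k ↔ ∀ m ∈ f.support, k ≤ Finsupp.weight w m := by
  rw [mem_weightedOrderIdeal]
  refine ⟨fun h m hm => ?_, fun h => MvPowerSeries.nat_le_weightedOrder w fun m hm => ?_⟩
  · have := h.trans (MvPowerSeries.weightedOrder_le w (by rwa [coeff_coe, ← mem_support_iff]))
    exact_mod_cast this
  · rw [coeff_coe, ← notMem_support_iff]
    exact fun hmem => (h m hmem).not_gt hm

theorem mem_ideal_of_forall_monomial_mem {J : Ideal (MvPolynomial σ R)} {f : MvPolynomial σ R}
    (h : ∀ m ∈ f.support, monomial m 1 ∈ J) : f ∈ J := by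
  rw [f.as_sum]
  refine J.sum_mem fun m hm => ?_
  rw [← mul_one (coeff m f), ← C_mul_monomial]
  exact J.mul_mem_left _ (h m hm)

theorem monomial_mem_weightedOrderIdeal [Nontrivial R] {m : σ →₀ ℕ} :
    monomial m (1 : R) ∈ weightedOrderIdeal w k ↔ k ≤ Finsupp.weight w m := by
  classical
  rw [mem_weightedOrderIdeal_iff_support, support_monomial, if_neg one_ne_zero]
  simp

theorem X_mem_weightedOrderIdeal_one_iff [Nontrivial R] {i : σ} :
    X i ∈ (weightedOrderIdeal w 1 : Ideal (MvPolynomial σ R)) ↔ w i ≠ 0 := by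
  rw [X, monomial_mem_weightedOrderIdeal, Finsupp.weight_single, one_smul, Nat.one_le_iff_ne_zero]

theorem weightedOrderIdeal_ne_top [Nontrivial R] (hk : k ≠ 0) :
    (weightedOrderIdeal w k : Ideal (MvPolynomial σ R)) ≠ ⊤ := by
  rw [Ne, Ideal.eq_top_iff_one, mem_weightedOrderIdeal, coe_one, MvPowerSeries.weightedOrder_one]
  exact_mod_cast Nat.pos_of_ne_zero hk |>.not_ge

theorem weightedOrderIdeal_mono {a b : ℕ} (hab : a ≤ b) :
    (weightedOrderIdeal w b : Ideal (MvPolynomial σ R)) ≤ weightedOrderIdeal w a :=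
  fun _ hf => mem_weightedOrderIdeal.mpr ((Nat.cast_le.mpr hab).trans hf)

theorem weightedOrderIdeal_mul_le (a b : ℕ) :
    weightedOrderIdeal w a * weightedOrderIdeal w b ≤
      (weightedOrderIdeal w (a + b) : Ideal (MvPolynomial σ R)) := by
  refine Ideal.mul_le.mpr fun f hf g hg => ?_
  rw [mem_weightedOrderIdeal, coe_mul, Nat.cast_add]
  exact (add_le_add hf hg).trans (MvPowerSeries.le_weightedOrder_mul w)

theorem weightedOrderIdeal_pow_le (n : ℕ) :
    weightedOrderIdeal w k ^ n ≤ (weightedOrderIdeal w (n * k) : Ideal (MvPolynomial σ R)) := by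
  induction n with
  | zero =>
    rw [pow_zero, zero_mul, Ideal.one_eq_top]
    exact fun f _ => mem_weightedOrderIdeal.mpr (by simp)
  | succ n ih =>
    rw [pow_succ, add_mul, one_mul]
    exact (Ideal.mul_mono_left ih).trans (weightedOrderIdeal_mul_le _ _)

theorem span_monomial_eq_weightedOrderIdeal [Nontrivial R] {A : Set (σ →₀ ℕ)}
    (hA : ∀ a ∈ A, k ≤ Finsupp.weight w a)
    (hdom : ∀ m, k ≤ Finsupp.weight w m → ∃ a ∈ A, a ≤ m) :
    Ideal.span ((monomial · (1 : R)) '' A) = weightedOrderIdeal w k := by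
  refine le_antisymm (Ideal.span_le.mpr ?_) fun f hf => mem_ideal_span_monomial_image.mpr ?_
  · rintro _ ⟨a, ha, rfl⟩
    exact monomial_mem_weightedOrderIdeal.mpr (hA a ha)
  · exact fun m hm => hdom m (mem_weightedOrderIdeal_iff_support.mp hf m hm)

section NoZeroDivisors

variable [NoZeroDivisors R] [Nontrivial R]

theorem isPrime_weightedOrderIdeal_one :
    (weightedOrderIdeal w 1 : Ideal (MvPolynomial σ R)).IsPrime := by
  refine ⟨weightedOrderIdeal_ne_top one_ne_zero, fun {f g} hfg => ?_⟩
  simp only [mem_weightedOrderIdeal, coe_mul, MvPowerSeries.weightedOrder_mul, Nat.cast_one,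
    Order.one_le_iff_ne_zero] at hfg ⊢
  contrapose! hfg
  simp [hfg.1, hfg.2]

theorem radical_weightedOrderIdeal (hk : k ≠ 0) :
    (weightedOrderIdeal w k : Ideal (MvPolynomial σ R)).radical = weightedOrderIdeal w 1 := by
  refine le_antisymm ?_ fun f hf => ⟨k, ?_⟩
  · rw [← isPrime_weightedOrderIdeal_one.radical]
    exact Ideal.radical_mono (weightedOrderIdeal_mono (Nat.one_le_iff_ne_zero.mpr hk))
  · simpa using weightedOrderIdeal_pow_le k (Ideal.pow_mem_pow hf k)

theorem isPrimary_weightedOrderIdeal (hk : k ≠ 0) :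
    (weightedOrderIdeal w k : Ideal (MvPolynomial σ R)).IsPrimary := by
  rw [Ideal.isPrimary_iff, radical_weightedOrderIdeal hk]
  refine ⟨weightedOrderIdeal_ne_top hk, fun {f g} hfg => or_iff_not_imp_right.mpr fun hg => ?_⟩
  simp only [mem_weightedOrderIdeal, coe_mul, MvPowerSeries.weightedOrder_mul, Nat.cast_one,
    Order.one_le_iff_ne_zero, not_not] at hfg hg ⊢
  simpa [hg] using hfg

end NoZeroDivisors

end MvPolynomial

section FiveCycle

variable {K : Type*} [Field K]

noncomputable def cycleIdeal : Ideal (MvPolynomial (Fin 5) K) :=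
  Ideal.span {X 0 * X 1, X 1 * X 2 ^ 2, X 2 * X 3, X 3 ^ 2 * X 4, X 4 * X 0}

noncomputable def cycleComponents : Fin 5 → Ideal (MvPolynomial (Fin 5) K) :=
  ![Ideal.span {X 0, X 1, X 3}, Ideal.span {X 1, X 2, X 4}, Ideal.span {X 1, X 3, X 4},
    Ideal.span {X 0, X 2, X 4}, Ideal.span {X 0, X 2 ^ 2, X 2 * X 3, X 3 ^ 2}]

def componentWeight : Fin 5 → Fin 5 → ℕ :=
  ![![1, 1, 0, 1, 0], ![0, 1, 1, 0, 1], ![0, 1, 0, 1, 1], ![1, 0, 1, 0, 1], ![2, 0, 1, 1, 0]]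

def componentDegree : Fin 5 → ℕ := ![1, 1, 1, 1, 2]

def componentExponents : Fin 5 → Set (Fin 5 →₀ ℕ) :=
  ![{.single 0 1, .single 1 1, .single 3 1}, {.single 1 1, .single 2 1, .single 4 1},
    {.single 1 1, .single 3 1, .single 4 1}, {.single 0 1, .single 2 1, .single 4 1},
    {.single 0 1, .single 2 2, .single 2 1 + .single 3 1, .single 3 2}]

theorem cycleComponents_eq (k : Fin 5) :
    (cycleComponents k : Ideal (MvPolynomial (Fin 5) K)) =
      weightedOrderIdeal (componentWeight k) (componentDegree k) := by
  rw [← span_monomial_eq_weightedOrderIdeal (A := componentExponents k)]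
  · fin_cases k <;>
      simp [cycleComponents, componentExponents, Set.image_insert_eq, X, monomial_mul, monomial_pow]
  · fin_cases k <;>
      simp [componentExponents, componentWeight, componentDegree, Finsupp.weight_single]
  · intro m hm
    rw [Finsupp.weight_eq_sum, Fin.sum_univ_five] at hm
    fin_cases k <;>
      simp [componentExponents, componentWeight, componentDegree, Finsupp.le_def,
        Fin.forall_fin_succ] at hm ⊢ <;> omega

theorem cycleIdeal_le_cycleComponents (k : Fin 5) :
    (cycleIdeal : Ideal (MvPolynomial (Fin 5) K)) ≤ cycleComponents k := by
  rw [cycleComponents_eq, cycleIdeal, Ideal.span_le]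
  fin_cases k <;>
    simp [Set.insert_subset_iff, X, monomial_mul, monomial_pow, monomial_mem_weightedOrderIdeal,
      Finsupp.weight_single, componentWeight, componentDegree]

noncomputable def irredundanceWitness : Fin 5 → MvPolynomial (Fin 5) K :=
  ![X 2 ^ 2 * X 4, X 0 * X 3, X 0 * X 2, X 1 * X 3 ^ 2, X 1 * X 4]

theorem irredundanceWitness_mem_cycleComponents_iff (k l : Fin 5) :
    (irredundanceWitness k : MvPolynomial (Fin 5) K) ∈ cycleComponents l ↔ l ≠ k := by
  rw [cycleComponents_eq]
  fin_cases k <;> fin_cases l <;>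
    simp [irredundanceWitness, X, monomial_mul, monomial_pow, monomial_mem_weightedOrderIdeal,
      Finsupp.weight_single, componentWeight, componentDegree]

theorem exists_edge_multiplicities (s : ℕ) : ∀ c₀ c₁ c₂ c₃ c₄ : ℕ,
    s ≤ c₀ + c₁ + c₃ → s ≤ c₁ + c₂ + c₄ → s ≤ c₁ + c₃ + c₄ → s ≤ c₀ + c₂ + c₄ →
    2 * s ≤ 2 * c₀ + c₂ + c₃ →
    ∃ a₀ a₁ a₂ a₃ a₄ : ℕ, a₀ + a₁ + a₂ + a₃ + a₄ = s ∧
      a₀ + a₄ ≤ c₀ ∧ a₀ + a₁ ≤ c₁ ∧ 2 * a₁ + a₂ ≤ c₂ ∧ a₂ + 2 * a₃ ≤ c₃ ∧ a₃ + a₄ ≤ c₄ := by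
  induction s with
  | zero => exact fun _ _ _ _ _ _ _ _ _ _ => ⟨0, 0, 0, 0, 0, by omega⟩
  | succ s ih =>
    intro c₀ c₁ c₂ c₃ c₄ h₀₁₃ h₁₂₄ h₁₃₄ h₀₂₄ h₀₂₃
    -- some generator exponent can be subtracted from `c` keeping all five bounds for `s`
    have step :
        (1 ≤ c₀ ∧ 1 ≤ c₁ ∧ s ≤ (c₀-1)+(c₁-1)+c₃ ∧ s ≤ (c₁-1)+c₂+c₄ ∧ s ≤ (c₁-1)+c₃+c₄ ∧
          s ≤ (c₀-1)+c₂+c₄ ∧ 2*s ≤ 2*(c₀-1)+c₂+c₃) ∨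
        (1 ≤ c₁ ∧ 2 ≤ c₂ ∧ s ≤ c₀+(c₁-1)+c₃ ∧ s ≤ (c₁-1)+(c₂-2)+c₄ ∧ s ≤ (c₁-1)+c₃+c₄ ∧
          s ≤ c₀+(c₂-2)+c₄ ∧ 2*s ≤ 2*c₀+(c₂-2)+c₃) ∨
        (1 ≤ c₂ ∧ 1 ≤ c₃ ∧ s ≤ c₀+c₁+(c₃-1) ∧ s ≤ c₁+(c₂-1)+c₄ ∧ s ≤ c₁+(c₃-1)+c₄ ∧
          s ≤ c₀+(c₂-1)+c₄ ∧ 2*s ≤ 2*c₀+(c₂-1)+(c₃-1)) ∨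
        (2 ≤ c₃ ∧ 1 ≤ c₄ ∧ s ≤ c₀+c₁+(c₃-2) ∧ s ≤ c₁+c₂+(c₄-1) ∧ s ≤ c₁+(c₃-2)+(c₄-1) ∧
          s ≤ c₀+c₂+(c₄-1) ∧ 2*s ≤ 2*c₀+c₂+(c₃-2)) ∨
        (1 ≤ c₄ ∧ 1 ≤ c₀ ∧ s ≤ (c₀-1)+c₁+c₃ ∧ s ≤ c₁+c₂+(c₄-1) ∧ s ≤ c₁+c₃+(c₄-1) ∧
          s ≤ (c₀-1)+c₂+(c₄-1) ∧ 2*s ≤ 2*(c₀-1)+c₂+c₃) := by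
      omega
    rcases step with ⟨_, _, h⟩ | ⟨_, _, h⟩ | ⟨_, _, h⟩ | ⟨_, _, h⟩ | ⟨_, _, h⟩
    · obtain ⟨a₀, a₁, a₂, a₃, a₄, ha⟩ := ih _ _ _ _ _ h.1 h.2.1 h.2.2.1 h.2.2.2.1 h.2.2.2.2
      exact ⟨a₀ + 1, a₁, a₂, a₃, a₄, by omega⟩
    · obtain ⟨a₀, a₁, a₂, a₃, a₄, ha⟩ := ih _ _ _ _ _ h.1 h.2.1 h.2.2.1 h.2.2.2.1 h.2.2.2.2
      exact ⟨a₀, a₁ + 1, a₂, a₃, a₄, by omega⟩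
    · obtain ⟨a₀, a₁, a₂, a₃, a₄, ha⟩ := ih _ _ _ _ _ h.1 h.2.1 h.2.2.1 h.2.2.2.1 h.2.2.2.2
      exact ⟨a₀, a₁, a₂ + 1, a₃, a₄, by omega⟩
    · obtain ⟨a₀, a₁, a₂, a₃, a₄, ha⟩ := ih _ _ _ _ _ h.1 h.2.1 h.2.2.1 h.2.2.2.1 h.2.2.2.2
      exact ⟨a₀, a₁, a₂, a₃ + 1, a₄, by omega⟩
    · obtain ⟨a₀, a₁, a₂, a₃, a₄, ha⟩ := ih _ _ _ _ _ h.1 h.2.1 h.2.2.1 h.2.2.2.1 h.2.2.2.2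
      exact ⟨a₀, a₁, a₂, a₃, a₄ + 1, by omega⟩

theorem monomial_mem_cycleIdeal_pow {m : Fin 5 →₀ ℕ} {a₀ a₁ a₂ a₃ a₄ : ℕ}
    (h₀ : a₀ + a₄ ≤ m 0) (h₁ : a₀ + a₁ ≤ m 1) (h₂ : 2 * a₁ + a₂ ≤ m 2) (h₃ : a₂ + 2 * a₃ ≤ m 3)
    (h₄ : a₃ + a₄ ≤ m 4) :
    monomial m (1 : K) ∈ cycleIdeal ^ (a₀ + a₁ + a₂ + a₃ + a₄) := by
  have hgen (g : MvPolynomial (Fin 5) K)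
      (hg : g ∈ ({X 0 * X 1, X 1 * X 2 ^ 2, X 2 * X 3, X 3 ^ 2 * X 4, X 4 * X 0} : Set _))
      (n : ℕ) :
      g ^ n ∈ (cycleIdeal ^ n : Ideal _) :=
    Ideal.pow_mem_pow (Ideal.subset_span hg) n
  have hprod := Ideal.mul_mem_mul (Ideal.mul_mem_mul (Ideal.mul_mem_mul (Ideal.mul_mem_mul
    (hgen (X 0 * X 1) (by simp only [Set.mem_insert_iff, true_or]) a₀)
    (hgen (X 1 * X 2 ^ 2) (by simp only [Set.mem_insert_iff, true_or, or_true]) a₁))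
    (hgen (X 2 * X 3) (by simp only [Set.mem_insert_iff, true_or, or_true]) a₂))
    (hgen (X 3 ^ 2 * X 4) (by simp only [Set.mem_insert_iff, true_or, or_true]) a₃))
    (hgen (X 4 * X 0) (by simp only [Set.mem_insert_iff, Set.mem_singleton_iff, or_true]) a₄)
  simp only [← pow_add] at hprod
  refine Ideal.mem_of_dvd _ ?_ hprod
  rw [monomial_eq, C_1, one_mul, Finsupp.prod_fintype _ _ fun _ => pow_zero _, Fin.prod_univ_five]
  calc (X 0 * X 1 : MvPolynomial (Fin 5) K) ^ a₀ * (X 1 * X 2 ^ 2) ^ a₁ * (X 2 * X 3) ^ a₂ *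
        (X 3 ^ 2 * X 4) ^ a₃ * (X 4 * X 0) ^ a₄
      = X 0 ^ (a₀ + a₄) * X 1 ^ (a₀ + a₁) * X 2 ^ (2 * a₁ + a₂) * X 3 ^ (a₂ + 2 * a₃) *
          X 4 ^ (a₃ + a₄) := by ring
    _ ∣ X 0 ^ m 0 * X 1 ^ m 1 * X 2 ^ m 2 * X 3 ^ m 3 * X 4 ^ m 4 :=
      mul_dvd_mul (mul_dvd_mul (mul_dvd_mul (mul_dvd_mul (pow_dvd_pow _ h₀) (pow_dvd_pow _ h₁))
        (pow_dvd_pow _ h₂)) (pow_dvd_pow _ h₃)) (pow_dvd_pow _ h₄)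

theorem iInf_cycleComponents_pow (s : ℕ) :
    ⨅ k, cycleComponents k ^ s = (cycleIdeal ^ s : Ideal (MvPolynomial (Fin 5) K)) := by
  refine le_antisymm (fun f hf => mem_ideal_of_forall_monomial_mem fun m hm => ?_)
    (le_iInf fun k => Ideal.pow_right_mono (cycleIdeal_le_cycleComponents k) s)
  have hw (k : Fin 5) : s * componentDegree k ≤ Finsupp.weight (componentWeight k) m := by
    have hk : f ∈ cycleComponents k ^ s := (Submodule.mem_iInf _).mp hf k
    rw [cycleComponents_eq] at hk
    exact mem_weightedOrderIdeal_iff_support.mp (weightedOrderIdeal_pow_le s hk) m hm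
  have h₀ := hw 0; have h₁ := hw 1; have h₂ := hw 2; have h₃ := hw 3; have h₄ := hw 4
  simp only [Finsupp.weight_eq_sum, Fin.sum_univ_five] at h₀ h₁ h₂ h₃ h₄
  simp [componentWeight, componentDegree] at h₀ h₁ h₂ h₃ h₄
  obtain ⟨a₀, a₁, a₂, a₃, a₄, rfl, ha⟩ :=
    exists_edge_multiplicities s (m 0) (m 1) (m 2) (m 3) (m 4)
      (by omega) (by omega) (by omega) (by omega) (by omega)
  exact monomial_mem_cycleIdeal_pow ha.1 ha.2.1 ha.2.2.1 ha.2.2.2.1 ha.2.2.2.2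

theorem iInf_cycleComponents :
    ⨅ k, cycleComponents k = (cycleIdeal : Ideal (MvPolynomial (Fin 5) K)) := by
  simpa only [pow_one] using iInf_cycleComponents_pow 1

theorem componentDegree_ne_zero (k : Fin 5) : componentDegree k ≠ 0 := by
  fin_cases k <;> decide

theorem cycleComponents_isPrimary (k : Fin 5) :
    (cycleComponents k : Ideal (MvPolynomial (Fin 5) K)).IsPrimary := by
  rw [cycleComponents_eq]
  exact isPrimary_weightedOrderIdeal (componentDegree_ne_zero k)

theorem radical_cycleComponents (k : Fin 5) :
    (cycleComponents k : Ideal (MvPolynomial (Fin 5) K)).radical =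
      weightedOrderIdeal (componentWeight k) 1 := by
  rw [cycleComponents_eq, radical_weightedOrderIdeal (componentDegree_ne_zero k)]

theorem radical_cycleComponents_injective :
    Function.Injective fun k => (cycleComponents k : Ideal (MvPolynomial (Fin 5) K)).radical := by
  intro k l h
  simp only [radical_cycleComponents] at h
  have hsupp (i : Fin 5) : componentWeight k i ≠ 0 ↔ componentWeight l i ≠ 0 := by
    rw [← X_mem_weightedOrderIdeal_one_iff (R := K), h, X_mem_weightedOrderIdeal_one_iff]
  have key : ∀ k l : Fin 5,
      (∀ i, componentWeight k i ≠ 0 ↔ componentWeight l i ≠ 0) → k = l := by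
    decide
  exact key k l hsupp

theorem iInf_compl_cycleComponents_ne (k : Fin 5) :
    (⨅ l ∈ ({k}ᶜ : Set (Fin 5)), cycleComponents l) ≠
      (cycleIdeal : Ideal (MvPolynomial (Fin 5) K)) := by
  intro h
  have hk : irredundanceWitness k ∈
      ⨅ l ∈ ({k}ᶜ : Set (Fin 5)), (cycleComponents l : Ideal (MvPolynomial (Fin 5) K)) := by
    simp only [Submodule.mem_iInf]
    exact fun l hl => (irredundanceWitness_mem_cycleComponents_iff k l).mpr hl
  rw [h] at hk
  exact (irredundanceWitness_mem_cycleComponents_iff k k).mp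
    (cycleIdeal_le_cycleComponents k hk) rfl

end FiveCycle

theorem stmt13 {K : Type*} [Field K]
    (I : Ideal (MvPolynomial (Fin 5) K))
    (Q : Fin 5 → Ideal (MvPolynomial (Fin 5) K))
    (hI : I = Ideal.span {X 0 * X 1, X 1 * X 2 ^ 2, X 2 * X 3, X 3 ^ 2 * X 4, X 4 * X 0})
    (hQ : Q = ![Ideal.span {X 0, X 1, X 3}, Ideal.span {X 1, X 2, X 4},
      Ideal.span {X 1, X 3, X 4}, Ideal.span {X 0, X 2, X 4},
      Ideal.span {X 0, X 2 ^ 2, X 2 * X 3, X 3 ^ 2}]) :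
    I = (⨅ k, Q k) ∧
    (∀ k, (Q k).IsPrimary) ∧
    (∀ k l, k ≠ l → (Q k).radical ≠ (Q l).radical) ∧
    (∀ k, (⨅ l ∈ ({k}ᶜ : Set (Fin 5)), Q l) ≠ I) ∧
    (∀ s : ℕ, 1 ≤ s → (⨅ k, (Q k) ^ s) = I ^ s) := by
  subst hI hQ
  exact ⟨iInf_cycleComponents.symm, cycleComponents_isPrimary,
    fun k l hkl h => hkl (radical_cycleComponents_injective h), iInf_compl_cycleComponents_ne,
    fun s _ => iInf_cycleComponents_pow s⟩
end
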